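/- arXiv:1906.11274 — 4 statements merged into one kernel-verified Lean document; each statement's English description precedes it below -/
import Mathlib

section
/- Let λ > 0 and let v : ℝ → ℝ be continuously differentiable, odd (v(-x) = -v(x)), with v and v' square-integrable. Then ∫_ℝ v'(x)² dx - (2/λ²) ∫_ℝ sech²(x/λ) v(x)² dx ≥ 0. -/
/-!
Ground-state substitution on the half-line. `ψ(x) = tanh (x / λ)` is an odd, zero-energy
solution of `-ψ'' - V ψ = 0` with `V = (2 / λ²) sech² (x / λ)`, positive on `(0, ∞)`, so
`g = ψ' / ψ` solves the Riccati equation `g' = -(g² + V)` there. Then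
`(g v²)' = v'² - V v² - (v' - g v)² ≤ v'² - V v²`, and integrating over `(0, ∞)` gives
`∫ (v'² - V v²) ≥ 0`, because the boundary term `g v²` vanishes at both ends:
`0 < g ≤ 1 / x`, `v(0) = 0` by oddness, and `v²` has a limit at `∞` since its derivative
`2 v v'` is integrable. Both integrands are even, so the half-line inequality doubles to the
whole line.
-/

open MeasureTheory Real Set Filter Topology

theorem integral_eq_two_mul_integral_Ioi_of_even {f : ℝ → ℝ} (hf : Function.Even f) :
    ∫ x, f x = 2 * ∫ x in Ioi (0 : ℝ), f x := by
  rw [← integral_comp_abs]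
  congr 1 with x
  rcases le_or_gt 0 x with hx | hx
  · rw [abs_of_nonneg hx]
  · rw [abs_of_neg hx, hf]

theorem Function.Odd.even_deriv {f : ℝ → ℝ} (hf : Function.Odd f) :
    Function.Even (deriv f) := by
  intro x
  have h := deriv_comp_neg (f := f) (x := x)
  rwa [funext hf, deriv.fun_neg, neg_inj, eq_comm] at h

theorem integrable_mul_of_integrable_sq {α : Type*} [MeasurableSpace α] {μ : Measure α}
    {f g : α → ℝ} (hf : AEStronglyMeasurable f μ) (hg : AEStronglyMeasurable g μ)
    (hf2 : Integrable (fun x => f x ^ 2) μ) (hg2 : Integrable (fun x => g x ^ 2) μ) :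
    Integrable (fun x => f x * g x) μ :=
  ((memLp_two_iff_integrable_sq hf).2 hf2).integrable_mul
    ((memLp_two_iff_integrable_sq hg).2 hg2)

theorem tendsto_sq_div_self_nhdsNE_zero {v : ℝ → ℝ} {v' : ℝ} (hv : HasDerivAt v v' 0)
    (h0 : v 0 = 0) : Tendsto (fun x => v x ^ 2 / x) (𝓝[≠] 0) (𝓝 0) := by
  have hslope : Tendsto (fun x => v x / x) (𝓝[≠] 0) (𝓝 v') :=
    (hasDerivAt_iff_tendsto_slope.1 hv).congr fun x => by simp [slope_def_field, h0]
  have hzero : Tendsto v (𝓝[≠] 0) (𝓝 0) := by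
    simpa [h0] using hv.continuousAt.tendsto.mono_left nhdsWithin_le_nhds
  simpa [sq, mul_div_assoc] using hzero.mul hslope

theorem tendsto_sq_div_self_atTop {v v' : ℝ → ℝ} (hv : ∀ x, HasDerivAt v (v' x) x)
    (hvv' : Integrable fun x => v x * v' x) : Tendsto (fun x => v x ^ 2 / x) atTop (𝓝 0) :=
  (tendsto_limUnder_of_hasDerivAt_of_integrableOn_Ioi (a := 0)
    (fun x _ => ((hv x).pow 2).congr_deriv (by norm_num; ring))
    (hvv'.const_mul 2).integrableOn).div_atTop tendsto_id

theorem MeasureTheory.Integrable.sech_sq_mul {f : ℝ → ℝ} (hf : Integrable f) (lam : ℝ) :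
    Integrable fun x => (1 / cosh (x / lam)) ^ 2 * f x := by
  refine hf.bdd_mul (c := 1)
    ((continuous_const.div (by fun_prop) fun _ => (cosh_pos _).ne').pow 2).aestronglyMeasurable
    (ae_of_all _ fun x => ?_)
  rw [norm_pow, norm_div, norm_one, norm_of_nonneg (cosh_pos _).le]
  exact pow_le_one₀ (by positivity) (div_le_one_of_le₀ (one_le_cosh _) (cosh_pos _).le)

theorem sub_le_integral_Ioi_of_hasDerivAt_of_le {F F' f : ℝ → ℝ} {a l m : ℝ}
    (hderiv : ∀ x ∈ Ioi a, HasDerivAt F (F' x) x) (hle : ∀ x ∈ Ioi a, F' x ≤ f x)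
    (hf : IntegrableOn f (Ioi a)) (hl : Tendsto F (𝓝[>] a) (𝓝 l))
    (hm : Tendsto F atTop (𝓝 m)) : m - l ≤ ∫ x in Ioi a, f x := by
  classical
  -- extending `F` by its limit at `a` makes it continuous on every `[a, b]`
  set G := Function.update F a l
  have hGF : ∀ x ∈ Ioi a, G =ᶠ[𝓝 x] F := fun x hx => by
    filter_upwards [eventually_ne_nhds (ne_of_gt hx)] with y hy using Function.update_of_ne hy ..
  have hinterval : ∀ b, a < b → F b - l ≤ ∫ x in a..b, f x := by
    intro b hab
    have hcont : ContinuousOn G (Icc a b) := by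
      intro x hx
      rcases hx.1.eq_or_lt with rfl | hax
      · exact continuousWithinAt_update_same.2 <|
          hl.mono_left <| nhdsWithin_mono _ fun y hy => lt_of_le_of_ne hy.1.1 (Ne.symm hy.2)
      · exact ((hderiv x hax).continuousAt.congr (hGF x hax).symm).continuousWithinAt
    have h := intervalIntegral.sub_le_integral_of_hasDeriv_right_of_le hab.le hcont
      (fun x hx => ((hderiv x hx.1).congr_of_eventuallyEq (hGF x hx.1)).hasDerivWithinAt)
      ((integrableOn_Icc_iff_integrableOn_Ioc).2 (hf.mono_set Ioc_subset_Ioi_self))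
      (fun x hx => hle x hx.1)
    simpa [G, Function.update_of_ne hab.ne'] using h
  exact le_of_tendsto_of_tendsto (hm.sub_const l)
    (intervalIntegral_tendsto_integral_Ioi a hf tendsto_id)
    (eventually_gt_atTop a |>.mono hinterval)

theorem hasDerivAt_mul_sq_of_riccati {g v : ℝ → ℝ} {V v' x : ℝ}
    (hg : HasDerivAt g (-(g x ^ 2 + V)) x) (hv : HasDerivAt v v' x) :
    HasDerivAt (fun y => g y * v y ^ 2) (v' ^ 2 - V * v x ^ 2 - (v' - g x * v x) ^ 2) x := by
  have h : HasDerivAt (fun y => g y * v y ^ 2) _ x := hg.mul (hv.pow 2)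
  convert h using 1
  push_cast
  ring

theorem integral_Ioi_deriv_sq_sub_mul_sq_nonneg_of_riccati {g V v v' : ℝ → ℝ} {a : ℝ}
    (hg : ∀ x ∈ Ioi a, HasDerivAt g (-(g x ^ 2 + V x)) x)
    (hv : ∀ x ∈ Ioi a, HasDerivAt v (v' x) x)
    (hint : IntegrableOn (fun x => v' x ^ 2 - V x * v x ^ 2) (Ioi a))
    (ha : Tendsto (fun x => g x * v x ^ 2) (𝓝[>] a) (𝓝 0))
    (htop : Tendsto (fun x => g x * v x ^ 2) atTop (𝓝 0)) :
    0 ≤ ∫ x in Ioi a, (v' x ^ 2 - V x * v x ^ 2) := by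
  simpa using sub_le_integral_Ioi_of_hasDerivAt_of_le
    (fun x hx => hasDerivAt_mul_sq_of_riccati (hg x hx) (hv x hx))
    (fun x _ => sub_le_self _ (sq_nonneg _)) hint ha htop

/-- `ψ' / ψ` for `ψ x = tanh (x / lam)`. -/
noncomputable def tanhLogDeriv (lam x : ℝ) : ℝ := 1 / (lam * sinh (x / lam) * cosh (x / lam))

theorem hasDerivAt_tanhLogDeriv {lam x : ℝ} (hlam : lam ≠ 0) (hx : x ≠ 0) :
    HasDerivAt (tanhLogDeriv lam)
      (-(tanhLogDeriv lam x ^ 2 + 2 / lam ^ 2 * (1 / cosh (x / lam)) ^ 2)) x := by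
  have hs : sinh (x / lam) ≠ 0 := by
    simpa using sinh_injective.ne (div_ne_zero hx hlam)
  have hc : cosh (x / lam) ≠ 0 := (cosh_pos _).ne'
  have hu : HasDerivAt (fun y => y / lam) (1 / lam) x := by
    simpa using (hasDerivAt_id x).div_const lam
  have hden := (hu.sinh.const_mul lam).mul hu.cosh
  have h : HasDerivAt (tanhLogDeriv lam) _ x :=
    (hasDerivAt_const x (1 : ℝ)).div hden (mul_ne_zero (mul_ne_zero hlam hs) hc)
  convert h using 1
  unfold tanhLogDeriv
  field_simp
  linear_combination cosh_sq (x / lam)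

theorem tanhLogDeriv_pos {lam x : ℝ} (hlam : 0 < lam) (hx : 0 < x) :
    0 < tanhLogDeriv lam x := by
  have := sinh_pos_iff.2 (div_pos hx hlam)
  unfold tanhLogDeriv
  positivity

theorem tanhLogDeriv_le_one_div {lam x : ℝ} (hlam : 0 < lam) (hx : 0 < x) :
    tanhLogDeriv lam x ≤ 1 / x := by
  have hs : x ≤ lam * sinh (x / lam) := by
    rw [← div_le_iff₀' hlam, self_le_sinh_iff]
    positivity
  unfold tanhLogDeriv
  gcongr
  exact hs.trans (le_mul_of_one_le_right (hx.le.trans hs) (one_le_cosh _))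

theorem tendsto_tanhLogDeriv_mul {lam : ℝ} (hlam : 0 < lam) {u : ℝ → ℝ} (hu : 0 ≤ u)
    {l : Filter ℝ} (hl : ∀ᶠ x in l, 0 < x) (h : Tendsto (fun x => u x / x) l (𝓝 0)) :
    Tendsto (fun x => tanhLogDeriv lam x * u x) l (𝓝 0) := by
  refine squeeze_zero' ?_ ?_ h <;> filter_upwards [hl] with x hx
  · exact mul_nonneg (tanhLogDeriv_pos hlam hx).le (hu x)
  · calc tanhLogDeriv lam x * u x ≤ 1 / x * u x :=
          mul_le_mul_of_nonneg_right (tanhLogDeriv_le_one_div hlam hx) (hu x)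
      _ = u x / x := one_div_mul_eq_div x (u x)

/-- Spectral inequality: the operator −d²/dx² − (2/λ²)sech²(x/λ) is nonnegative
on odd functions. -/
theorem spectral_inequality_odd
    (lam : ℝ) (hlam : 0 < lam)
    (v : ℝ → ℝ) (hv : ContDiff ℝ 1 v)
    (hodd : ∀ x : ℝ, v (-x) = - v x)
    (hv2 : Integrable (fun x : ℝ => (v x) ^ 2))
    (hv'2 : Integrable (fun x : ℝ => (deriv v x) ^ 2)) :
    0 ≤ (∫ x : ℝ, (deriv v x) ^ 2)
      - (2 / lam ^ 2) * ∫ x : ℝ, (1 / Real.cosh (x / lam)) ^ 2 * (v x) ^ 2 := by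
  replace hodd : Function.Odd v := hodd
  have hdv : ∀ x, HasDerivAt v (deriv v x) x := fun x =>
    (hv.differentiable one_ne_zero x).hasDerivAt
  have hpot := hv2.sech_sq_mul lam
  have hhalf := integral_Ioi_deriv_sq_sub_mul_sq_nonneg_of_riccati (a := 0)
    (V := fun x => 2 / lam ^ 2 * (1 / cosh (x / lam)) ^ 2)
    (fun x hx => hasDerivAt_tanhLogDeriv hlam.ne' (ne_of_gt hx)) (fun x _ => hdv x)
    (by simpa only [mul_assoc] using (hv'2.sub' (hpot.const_mul (2 / lam ^ 2))).integrableOn)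
    (tendsto_tanhLogDeriv_mul hlam (fun x => sq_nonneg (v x)) self_mem_nhdsWithin
      ((tendsto_sq_div_self_nhdsNE_zero (hdv 0) hodd.map_zero).mono_left (nhdsGT_le_nhdsNE 0)))
    (tendsto_tanhLogDeriv_mul hlam (fun x => sq_nonneg (v x)) (eventually_gt_atTop 0)
      (tendsto_sq_div_self_atTop hdv (integrable_mul_of_integrable_sq
        hv.continuous.aestronglyMeasurable (hv.continuous_deriv le_rfl).aestronglyMeasurable
        hv2 hv'2)))
  rw [integral_eq_two_mul_integral_Ioi_of_even fun x => by rw [hodd.even_deriv],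
    integral_eq_two_mul_integral_Ioi_of_even fun x => by rw [hodd x, neg_div, cosh_neg, neg_sq]]
  simp only [mul_assoc] at hhalf
  rw [integral_sub hv'2.integrableOn (hpot.const_mul _).integrableOn, integral_const_mul] at hhalf
  linarith
end

section
/- Let λ > 0 and let v : ℝ → ℝ be continuously differentiable, odd (v(-x) = -v(x)), with v and v' square-integrable. Define 𝓑(v) = 2∫_ℝ v'(x)² dx - (1/λ²)∫_ℝ sech²(x/λ) v(x)² dx. Then 𝓑(v) ≥ (3/2) ∫_ℝ v'(x)² dx. -/
/-!
`w x = tanh (x / λ)` solves `-w'' = (2/λ²) sech²(x/λ) w`. With `D = w / w' = λ sinh(x/λ) cosh(x/λ)`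
and `cosh² - sinh² = 1` one gets the pointwise ground-state identity
`v'² - (2/λ²) sech²(x/λ) v² = (v² / D)' + (v' - v / D)²`.
On `(0, ∞)` the boundary term `v² / D` is nonnegative, and it tends to `0` at `0⁺` because
`v 0 = 0` and `D x ≥ x`; integrating gives the Hardy-type inequality
`(2/λ²) ∫₀^∞ sech²(x/λ) v² ≤ ∫₀^∞ v'²`.
For odd `v` both integrands are even, so the same holds on `ℝ`, which is `𝓑(v) ≥ (3/2) ∫ v'²`.
-/

open MeasureTheory Real Set Filter Topology

theorem Function.Odd.deriv {𝕜 F : Type*} [NontriviallyNormedField 𝕜] [NormedAddCommGroup F]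
    [NormedSpace 𝕜 F] {f : 𝕜 → F} (hf : f.Odd) : (deriv f).Even := fun x => by
  have hf' : (fun y => -f (-y)) = f := funext fun y => by rw [hf y, neg_neg]
  conv_rhs => rw [← hf']
  rw [deriv.fun_neg, deriv_comp_neg, neg_neg]

theorem Function.Even.integral_eq_two_mul_setIntegral_Ioi {f : ℝ → ℝ} (hf : f.Even) :
    ∫ x, f x = 2 * ∫ x in Ioi 0, f x := by
  have habs : ∀ x, f |x| = f x := fun x => by
    rcases abs_choice x with h | h <;> simp only [h, hf x]
  simpa only [habs] using integral_comp_abs (f := f)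

theorem DifferentiableAt.tendsto_sq_div_nhdsGT_zero {f : ℝ → ℝ} (hf : DifferentiableAt ℝ f 0)
    (hf0 : f 0 = 0) : Tendsto (fun t => f t ^ 2 / t) (𝓝[>] 0) (𝓝 0) := by
  have hslope : Tendsto (fun t => t⁻¹ * f t) (𝓝[>] 0) (𝓝 (deriv f 0)) := by
    simpa only [zero_add, hf0, sub_zero, smul_eq_mul] using hf.hasDerivAt.tendsto_slope_zero_right
  have hf_cont : Tendsto f (𝓝[>] 0) (𝓝 0) := by
    simpa only [hf0] using hf.continuousAt.continuousWithinAt.tendsto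
  simpa only [mul_zero] using (hslope.mul hf_cont).congr fun t => by ring

theorem tendsto_setIntegral_Ioi_nhdsGT {h : ℝ → ℝ} {c : ℝ} (hh : IntegrableOn h (Ioi c)) :
    Tendsto (fun a => ∫ x in Ioi a, h x) (𝓝[>] c) (𝓝 (∫ x in Ioi c, h x)) := by
  have hcover : AECover (volume.restrict (Ioi c)) (𝓝[>] c) Ioi :=
    aecover_Ioi_of_Ioi (a := id) (tendsto_id.mono_left nhdsWithin_le_nhds)
  refine (hcover.integral_tendsto_of_countably_generated hh).congr' ?_
  filter_upwards [self_mem_nhdsWithin] with a (ha : c < a)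
  rw [Measure.restrict_restrict measurableSet_Ioi, inter_eq_left.mpr (Ioi_subset_Ioi ha.le)]

theorem neg_le_setIntegral_Ioi_of_deriv_le {F h : ℝ → ℝ} {a : ℝ} (hh : IntegrableOn h (Ioi a))
    (hF_cont : ContinuousOn F (Ici a)) (hF : ∀ x > a, DifferentiableAt ℝ F x)
    (hFh : ∀ x > a, deriv F x ≤ h x) (hF_nonneg : ∀ x > a, 0 ≤ F x) :
    -F a ≤ ∫ x in Ioi a, h x := by
  have hFTC : ∀ᶠ b in atTop, -F a ≤ ∫ x in a..b, h x := by
    filter_upwards [eventually_gt_atTop a] with b hab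
    have hle := intervalIntegral.sub_le_integral_of_hasDeriv_right_of_le hab.le
      (hF_cont.mono Icc_subset_Ici_self)
      (fun x hx => (hF x hx.1).hasDerivAt.hasDerivWithinAt)
      ((integrableOn_Icc_iff_integrableOn_Ioc).mpr (hh.mono_set Ioc_subset_Ioi_self))
      (fun x hx => hFh x hx.1)
    linarith [hF_nonneg b hab]
  exact ge_of_tendsto (intervalIntegral_tendsto_integral_Ioi a hh tendsto_id) hFTC

theorem setIntegral_Ioi_nonneg_of_deriv_le {F h : ℝ → ℝ} {c : ℝ} (hh : IntegrableOn h (Ioi c))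
    (hF : ∀ x > c, DifferentiableAt ℝ F x) (hFh : ∀ x > c, deriv F x ≤ h x)
    (hF_nonneg : ∀ x > c, 0 ≤ F x) (hFc : Tendsto F (𝓝[>] c) (𝓝 0)) :
    0 ≤ ∫ x in Ioi c, h x := by
  have hlower : ∀ᶠ a in 𝓝[>] c, -F a ≤ ∫ x in Ioi a, h x := by
    filter_upwards [self_mem_nhdsWithin] with a (ha : c < a)
    exact neg_le_setIntegral_Ioi_of_deriv_le (hh.mono_set (Ioi_subset_Ioi ha.le))
      (fun x hx => (hF x (ha.trans_le hx)).continuousAt.continuousWithinAt)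
      (fun x hx => hF x (ha.trans hx)) (fun x hx => hFh x (ha.trans hx))
      (fun x hx => hF_nonneg x (ha.trans hx))
  simpa using le_of_tendsto_of_tendsto hFc.neg (tendsto_setIntegral_Ioi_nhdsGT hh) hlower

/-- `tanh (x / λ)` divided by its derivative. -/
noncomputable def tanhRatio (lam x : ℝ) : ℝ := lam * sinh (x / lam) * cosh (x / lam)

theorem le_tanhRatio {lam x : ℝ} (hlam : 0 < lam) (hx : 0 ≤ x) : x ≤ tanhRatio lam x := by
  have hsinh : x / lam ≤ sinh (x / lam) := self_le_sinh_iff.mpr (by positivity)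
  have hsinh_nonneg : 0 ≤ sinh (x / lam) := sinh_nonneg_iff.mpr (by positivity)
  calc x = lam * (x / lam) * 1 := by field_simp
    _ ≤ tanhRatio lam x := by
      unfold tanhRatio
      gcongr
      exact one_le_cosh _

theorem hasDerivAt_tanhRatio {lam : ℝ} (hlam : lam ≠ 0) (x : ℝ) :
    HasDerivAt (tanhRatio lam) (cosh (x / lam) ^ 2 + sinh (x / lam) ^ 2) x := by
  have hu : HasDerivAt (fun y => y / lam) (1 / lam) x := (hasDerivAt_id x).div_const lam
  refine ((hu.sinh.const_mul lam).fun_mul hu.cosh).congr_deriv ?_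
  field_simp

theorem deriv_sq_div_tanhRatio_le {lam x : ℝ} {v : ℝ → ℝ} (hlam : 0 < lam) (hx : 0 < x)
    (hv : DifferentiableAt ℝ v x) :
    deriv (fun y => v y ^ 2 / tanhRatio lam y) x
      ≤ deriv v x ^ 2 - 2 / lam ^ 2 * ((1 / cosh (x / lam)) ^ 2 * v x ^ 2) := by
  have hD : 0 < tanhRatio lam x := hx.trans_le (le_tanhRatio hlam hx.le)
  rw [((hv.hasDerivAt.fun_pow 2).fun_div (hasDerivAt_tanhRatio hlam.ne' x) hD.ne').deriv]
  have hs : sinh (x / lam) ≠ 0 := (sinh_pos_iff.mpr (by positivity)).ne'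
  have hc : cosh (x / lam) ≠ 0 := (cosh_pos _).ne'
  have hpyth := cosh_sq_sub_sinh_sq (x / lam)
  refine sub_nonneg.mp ((sq_nonneg (deriv v x - v x / tanhRatio lam x)).trans_eq ?_)
  unfold tanhRatio
  field_simp
  linear_combination (-v x ^ 2) * hpyth

theorem tendsto_sq_div_tanhRatio {lam : ℝ} {v : ℝ → ℝ} (hlam : 0 < lam)
    (hv : DifferentiableAt ℝ v 0) (hv0 : v 0 = 0) :
    Tendsto (fun x => v x ^ 2 / tanhRatio lam x) (𝓝[>] 0) (𝓝 0) := by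
  refine tendsto_of_tendsto_of_tendsto_of_le_of_le' tendsto_const_nhds
    (hv.tendsto_sq_div_nhdsGT_zero hv0) ?_ ?_
  all_goals filter_upwards [self_mem_nhdsWithin] with x (hx : 0 < x)
  · exact div_nonneg (sq_nonneg _) (hx.le.trans (le_tanhRatio hlam hx.le))
  · exact div_le_div_of_nonneg_left (sq_nonneg _) hx (le_tanhRatio hlam hx.le)

theorem integrable_sech_sq_mul {μ : Measure ℝ} {f : ℝ → ℝ} (hf : Integrable f μ) (lam : ℝ) :
    Integrable (fun x => (1 / cosh (x / lam)) ^ 2 * f x) μ := by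
  have hsech : Continuous fun x => (1 / cosh (x / lam)) ^ 2 :=
    (continuous_const.div (by fun_prop) fun x => (cosh_pos _).ne').pow 2
  refine hf.bdd_mul (c := 1) hsech.aestronglyMeasurable (ae_of_all _ fun x => ?_)
  have hc : 1 ≤ cosh (x / lam) := one_le_cosh _
  rw [norm_pow, norm_div, norm_one, norm_of_nonneg (by positivity)]
  exact pow_le_one₀ (by positivity) ((div_le_one (by positivity)).mpr hc)

theorem setIntegral_Ioi_sech_sq_mul_sq_le {lam : ℝ} {v : ℝ → ℝ} (hlam : 0 < lam)
    (hv : Differentiable ℝ v) (hv0 : v 0 = 0) (hv2 : IntegrableOn (fun x => v x ^ 2) (Ioi 0))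
    (hv'2 : IntegrableOn (fun x => deriv v x ^ 2) (Ioi 0)) :
    2 / lam ^ 2 * ∫ x in Ioi 0, (1 / cosh (x / lam)) ^ 2 * v x ^ 2
      ≤ ∫ x in Ioi 0, deriv v x ^ 2 := by
  have hsech := (integrable_sech_sq_mul hv2 lam).const_mul (2 / lam ^ 2)
  have hpos : ∀ x > 0, 0 < tanhRatio lam x := fun x hx => hx.trans_le (le_tanhRatio hlam hx.le)
  have hnonneg := setIntegral_Ioi_nonneg_of_deriv_le (hv'2.sub hsech)
    (F := fun y => v y ^ 2 / tanhRatio lam y)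
    (h := fun x => deriv v x ^ 2 - 2 / lam ^ 2 * ((1 / cosh (x / lam)) ^ 2 * v x ^ 2))
    (fun x hx => ((hv x).pow 2).div (hasDerivAt_tanhRatio hlam.ne' x).differentiableAt
      (hpos x hx).ne')
    (fun x hx => deriv_sq_div_tanhRatio_le hlam hx (hv x))
    (fun x hx => div_nonneg (sq_nonneg _) (hpos x hx).le)
    (tendsto_sq_div_tanhRatio hlam (hv 0) hv0)
  rwa [integral_sub hv'2 hsech, integral_const_mul, sub_nonneg] at hnonneg

/-- Proposition 2.2: coercivity of the quadratic form 𝓑 on odd functions. -/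
theorem coercivity_bilinear_form_odd
    (lam : ℝ) (hlam : 0 < lam)
    (v : ℝ → ℝ) (hv : ContDiff ℝ 1 v)
    (hodd : ∀ x : ℝ, v (-x) = - v x)
    (hv2 : Integrable (fun x : ℝ => (v x) ^ 2))
    (hv'2 : Integrable (fun x : ℝ => (deriv v x) ^ 2)) :
    2 * (∫ x : ℝ, (deriv v x) ^ 2)
      - (1 / lam ^ 2) * (∫ x : ℝ, (1 / Real.cosh (x / lam)) ^ 2 * (v x) ^ 2)
    ≥ (3 / 2) * ∫ x : ℝ, (deriv v x) ^ 2 := by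
  have hodd' : Function.Odd v := hodd
  have hhardy := setIntegral_Ioi_sech_sq_mul_sq_le hlam (hv.differentiable one_ne_zero)
    hodd'.map_zero hv2.integrableOn hv'2.integrableOn
  have hderiv_even : Function.Even fun x => deriv v x ^ 2 := fun x =>
    congrArg (· ^ 2) (hodd'.deriv x)
  have hsech_even : Function.Even fun x => (1 / cosh (x / lam)) ^ 2 * v x ^ 2 := fun x => by
    simp only [neg_div, cosh_neg, hodd x, neg_sq]
  rw [hderiv_even.integral_eq_two_mul_setIntegral_Ioi,
    hsech_even.integral_eq_two_mul_setIntegral_Ioi]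
  linear_combination hhardy
end

section
/- Let λ = 100, φ(x) = 100·tanh(x/100), and define the bilinear form B(w) = 2∫_ℝ φ'(x) w'(x)² dx - (1/2)∫_ℝ φ'''(x) w(x)² dx for real-valued w with w, w' square-integrable. There exists C > 0 such that for every odd function u = u₁ + i·u₂ : ℝ → ℂ (u₁, u₂ real-valued, continuously differentiable, with u, u' square-integrable), ∫_ℝ sech(x)(|u'(x)|² + |u(x)|²) dx ≤ C·(B(u₁) + B(u₂)). -/
/-!
Write `w = cosh (x / l) · v`. Since `φ' = 1 / cosh² (x / l)`, the integrand of `B(w)` is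
`2 v'² - φ' v² / l²` plus the derivative of `(2 / l) tanh (x / l) v²`, so
`B(w) = 2 ∫ v'² - l⁻² ∫ φ' v²`. Oddness gives `v 0 = 0`, hence, by Cauchy–Schwarz, the
Hardy-type bound `v(x)² ≤ |x| ∫ v'²`; since `∫ |x| φ' ≤ 7 l² / 4 < 2 l²`, this yields
`∫ v'² ≤ 4 B(w)`. The same bound, now with the weight
`sech x · cosh² (x / l) ≤ 2 e^{-|x|/2}`, controls the weighted `H¹` norm of `w` by `52 ∫ v'²`.
Apply this to the real and imaginary parts of `u`.
-/

open MeasureTheory Real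

lemma integral_abs_mul_exp_neg_mul_abs {k : ℝ} (hk : 0 < k) :
    ∫ x, |x| * exp (-(k * |x|)) = 2 / k ^ 2 := by
  have h := integral_rpow_mul_exp_neg_mul_Ioi two_pos hk
  norm_num [Real.Gamma_two] at h
  rw [integral_comp_abs (f := fun x => x * exp (-(k * x))), h]
  field_simp

lemma integrable_abs_mul_exp_neg_mul_abs {k : ℝ} (hk : 0 < k) :
    Integrable fun x => |x| * exp (-(k * |x|)) :=
  .of_integral_ne_zero (by rw [integral_abs_mul_exp_neg_mul_abs hk]; positivity)

lemma sq_intervalIntegral_le {g : ℝ → ℝ} (hg : Continuous g) {a b : ℝ} (hab : a ≤ b) :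
    (∫ t in a..b, g t) ^ 2 ≤ (b - a) * ∫ t in a..b, g t ^ 2 := by
  have hquad (c : ℝ) :
      0 ≤ (b - a) * (c * c) + (-2 * ∫ t in a..b, g t) * c + ∫ t in a..b, g t ^ 2 := by
    have hg2 := (hg.fun_pow 2).intervalIntegrable (μ := volume) a b
    have hg1 := ((hg.intervalIntegrable (μ := volume) a b).const_mul 2).mul_const c
    have hexpand : ∫ t in a..b, (g t - c) ^ 2
        = (b - a) * (c * c) + (-2 * ∫ t in a..b, g t) * c + ∫ t in a..b, g t ^ 2 := by
      simp_rw [sub_sq]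
      rw [intervalIntegral.integral_add (hg2.sub hg1) intervalIntegrable_const,
        intervalIntegral.integral_sub hg2 hg1, intervalIntegral.integral_mul_const,
        intervalIntegral.integral_const_mul, intervalIntegral.integral_const, smul_eq_mul]
      ring
    rw [← hexpand]
    exact intervalIntegral.integral_nonneg hab fun t _ => sq_nonneg _
  have := discrim_le_zero hquad
  rw [discrim] at this
  linarith

lemma sq_sub_le_mul_integral_sq_deriv {v v' : ℝ → ℝ} (hv : ∀ x, HasDerivAt v (v' x) x)
    (hv' : Continuous v') (hv'2 : Integrable fun x => v' x ^ 2) {a b : ℝ} (hab : a ≤ b) :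
    (v b - v a) ^ 2 ≤ (b - a) * ∫ x, v' x ^ 2 := by
  rw [← intervalIntegral.integral_eq_sub_of_hasDerivAt (fun x _ => hv x)
    (hv'.intervalIntegrable a b)]
  refine (sq_intervalIntegral_le hv' hab).trans (mul_le_mul_of_nonneg_left ?_ (sub_nonneg.2 hab))
  rw [intervalIntegral.integral_of_le hab]
  exact setIntegral_le_integral hv'2 (.of_forall fun x => sq_nonneg _)

lemma sq_le_abs_mul_integral_sq_deriv {v v' : ℝ → ℝ} (hv : ∀ x, HasDerivAt v (v' x) x)
    (hv' : Continuous v') (hv'2 : Integrable fun x => v' x ^ 2) (hv0 : v 0 = 0) (x : ℝ) :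
    v x ^ 2 ≤ |x| * ∫ x, v' x ^ 2 := by
  rcases le_total 0 x with hx | hx
  · simpa [hv0, abs_of_nonneg hx] using sq_sub_le_mul_integral_sq_deriv hv hv' hv'2 hx
  · simpa [hv0, abs_of_nonpos hx] using sq_sub_le_mul_integral_sq_deriv hv hv' hv'2 hx

lemma integral_mul_sq_le_of_hasDerivAt {ρ v v' : ℝ → ℝ} (hρ : ∀ x, 0 ≤ ρ x)
    (hρ1 : Integrable fun x => |x| * ρ x) (hv : ∀ x, HasDerivAt v (v' x) x)
    (hv' : Continuous v') (hv'2 : Integrable fun x => v' x ^ 2) (hv0 : v 0 = 0) :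
    ∫ x, ρ x * v x ^ 2 ≤ (∫ x, |x| * ρ x) * ∫ x, v' x ^ 2 := by
  rw [← integral_mul_const]
  refine integral_mono_of_nonneg (.of_forall fun x => mul_nonneg (hρ x) (sq_nonneg _))
    (hρ1.mul_const _) (.of_forall fun x => ?_)
  calc ρ x * v x ^ 2 ≤ ρ x * (|x| * ∫ x, v' x ^ 2) :=
        mul_le_mul_of_nonneg_left (sq_le_abs_mul_integral_sq_deriv hv hv' hv'2 hv0 x) (hρ x)
    _ = |x| * ρ x * ∫ x, v' x ^ 2 := by ring

lemma integrable_clm_comp_sq {E : Type*} [NormedAddCommGroup E] [NormedSpace ℝ E]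
    (L : E →L[ℝ] ℝ) {f : ℝ → E} (hf : AEStronglyMeasurable f)
    (h : Integrable fun x => ‖f x‖ ^ 2) : Integrable fun x => L (f x) ^ 2 :=
  (h.const_mul (‖L‖ ^ 2)).mono' ((L.continuous.comp_aestronglyMeasurable hf).pow 2)
    (.of_forall fun x => by
      rw [norm_pow, ← mul_pow]
      exact pow_le_pow_left₀ (norm_nonneg _) (L.le_opNorm _) 2)

lemma cosh_le_exp_abs (y : ℝ) : cosh y ≤ exp |y| := by
  rw [← cosh_abs, cosh_eq]
  linarith [exp_le_exp.2 (neg_le_self (abs_nonneg y))]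

lemma one_div_cosh_le (y : ℝ) : 1 / cosh y ≤ 2 * exp (-|y|) := by
  rw [← cosh_abs, cosh_eq, exp_neg, one_div_div, div_le_iff₀ (by positivity)]
  have := exp_pos (-|y|)
  field_simp
  nlinarith [exp_pos |y|]

/-- With `q = e^{-|y|}` this is `(1 - q² / 2) (1 + q²)² ≥ 1`. -/
lemma one_div_cosh_sq_le (y : ℝ) :
    1 / cosh y ^ 2 ≤ 4 * exp (-(2 * |y|)) - 2 * exp (-(4 * |y|)) := by
  set q := exp (-|y|) with hq
  have hq0 : 0 < q := exp_pos _
  have hq1 : q ^ 2 ≤ 1 := pow_le_one₀ hq0.le (exp_le_one_iff.2 (neg_nonpos.2 (abs_nonneg y)))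
  have hcosh : cosh y = (q⁻¹ + q) / 2 := by rw [← cosh_abs, cosh_eq, hq, exp_neg, inv_inv]
  have h2 : exp (-(2 * |y|)) = q ^ 2 := by rw [hq, ← exp_nat_mul]; ring_nf
  have h4 : exp (-(4 * |y|)) = q ^ 4 := by rw [hq, ← exp_nat_mul]; ring_nf
  rw [hcosh, h2, h4, div_le_iff₀ (by positivity)]
  field_simp
  nlinarith [mul_nonneg (pow_pos hq0 2).le (by nlinarith : (0 : ℝ) ≤ 3 - (q ^ 2) ^ 2)]

lemma abs_one_div_cosh_sq_le_one (y : ℝ) : |1 / cosh y ^ 2| ≤ 1 := by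
  rw [abs_of_pos (by positivity)]
  exact div_le_one_of_le₀ (one_le_pow₀ (one_le_cosh y)) (by positivity)

lemma hasDerivAt_tanh (x : ℝ) : HasDerivAt tanh (1 / cosh x ^ 2) x := by
  have h := (hasDerivAt_sinh x).div (hasDerivAt_cosh x) (cosh_pos x).ne'
  refine (h.congr_of_eventuallyEq (.of_forall fun y => tanh_eq_sinh_div_cosh y)).congr_deriv ?_
  rw [← cosh_sq_sub_sinh_sq x]
  ring

lemma continuous_tanh : Continuous tanh :=
  continuous_iff_continuousAt.2 fun x => (hasDerivAt_tanh x).continuousAt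

section Profile

variable {l : ℝ}

lemma deriv_mul_tanh_div (hl : l ≠ 0) :
    deriv (fun y => l * tanh (y / l)) = fun x => 1 / cosh (x / l) ^ 2 := by
  ext x
  have h := ((hasDerivAt_tanh (x / l)).comp x ((hasDerivAt_id' x).div_const l)).const_mul l
  rw [show (fun y => l * tanh (y / l)) = fun y => l * (tanh ∘ fun y => y / l) y from rfl, h.deriv]
  field_simp

lemma iteratedDeriv_three_mul_tanh_div (hl : l ≠ 0) :
    iteratedDeriv 3 (fun y => l * tanh (y / l))
      = fun x => 2 * (2 * sinh (x / l) ^ 2 - 1) / (l ^ 2 * cosh (x / l) ^ 4) := by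
  have hid (x : ℝ) : HasDerivAt (fun y => y / l) (1 / l) x := (hasDerivAt_id' x).div_const l
  have hc (x : ℝ) : cosh (x / l) ≠ 0 := (cosh_pos _).ne'
  have d2 : deriv (fun x => 1 / cosh (x / l) ^ 2)
      = fun x => -2 * sinh (x / l) / (l * cosh (x / l) ^ 3) := by
    ext x
    have h : HasDerivAt (fun x => 1 / cosh (x / l) ^ 2)
        ((0 * cosh (x / l) ^ 2 - 1 * (2 * cosh (x / l) ^ 1 * (sinh (x / l) * (1 / l))))
          / (cosh (x / l) ^ 2) ^ 2) x :=
      (hasDerivAt_const x 1).div ((hid x).cosh.pow 2) (pow_ne_zero 2 (hc x))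
    rw [h.deriv]
    field_simp
    ring
  have d3 : deriv (fun x => -2 * sinh (x / l) / (l * cosh (x / l) ^ 3))
      = fun x => 2 * (2 * sinh (x / l) ^ 2 - 1) / (l ^ 2 * cosh (x / l) ^ 4) := by
    ext x
    have h : HasDerivAt (fun x => -2 * sinh (x / l) / (l * cosh (x / l) ^ 3))
        ((-2 * (cosh (x / l) * (1 / l)) * (l * cosh (x / l) ^ 3)
          - -2 * sinh (x / l) * (l * (3 * cosh (x / l) ^ 2 * (sinh (x / l) * (1 / l)))))
          / (l * cosh (x / l) ^ 3) ^ 2) x :=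
      ((hid x).sinh.const_mul (-2)).div (((hid x).cosh.pow 3).const_mul l)
        (mul_ne_zero hl (pow_ne_zero 3 (hc x)))
    rw [h.deriv]
    field_simp
    linear_combination -cosh_sq_sub_sinh_sq (x / l)
  rw [iteratedDeriv_eq_iterate]
  simp only [Function.iterate_succ, Function.iterate_zero, Function.comp_apply, id]
  rw [deriv_mul_tanh_div hl, d2, d3]

lemma abs_iteratedDeriv_three_mul_tanh_div_le (hl : l ≠ 0) (x : ℝ) :
    |iteratedDeriv 3 (fun y => l * tanh (y / l)) x| ≤ 4 / l ^ 2 := by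
  rw [iteratedDeriv_three_mul_tanh_div hl]
  have hc := one_le_cosh (x / l)
  have hc2 := mul_le_mul hc hc zero_le_one (by linarith)
  have hs := sinh_sq (x / l)
  have hnum : |2 * (2 * sinh (x / l) ^ 2 - 1)| ≤ 4 * cosh (x / l) ^ 4 :=
    abs_le.2 ⟨by nlinarith, by nlinarith⟩
  rw [abs_div, abs_of_pos (a := l ^ 2 * cosh (x / l) ^ 4) (by positivity),
    div_le_div_iff₀ (by positivity) (by positivity)]
  nlinarith [mul_le_mul_of_nonneg_right hnum (sq_nonneg l)]

lemma abs_mul_one_div_cosh_sq_le (hl : 0 < l) (x : ℝ) :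
    |x| * (1 / cosh (x / l) ^ 2)
      ≤ 4 * (|x| * exp (-(2 / l * |x|))) - 2 * (|x| * exp (-(4 / l * |x|))) := by
  have h := one_div_cosh_sq_le (x / l)
  rw [abs_div, abs_of_pos hl] at h
  calc |x| * (1 / cosh (x / l) ^ 2)
      ≤ |x| * (4 * exp (-(2 * (|x| / l))) - 2 * exp (-(4 * (|x| / l)))) :=
        mul_le_mul_of_nonneg_left h (abs_nonneg x)
    _ = _ := by ring_nf

lemma integrable_abs_mul_one_div_cosh_sq (hl : 0 < l) :
    Integrable fun x => |x| * (1 / cosh (x / l) ^ 2) :=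
  (((integrable_abs_mul_exp_neg_mul_abs (k := 2 / l) (by positivity)).const_mul 4).sub
    ((integrable_abs_mul_exp_neg_mul_abs (k := 4 / l) (by positivity)).const_mul 2)).mono'
    (continuous_abs.mul (continuous_const.div (by fun_prop)
      fun _ => (pow_pos (cosh_pos _) 2).ne')).aestronglyMeasurable
    (.of_forall fun x => by
      rw [Real.norm_eq_abs, abs_of_nonneg (by positivity)]
      exact abs_mul_one_div_cosh_sq_le hl x)

lemma integral_abs_mul_one_div_cosh_sq_le (hl : 0 < l) :
    ∫ x, |x| * (1 / cosh (x / l) ^ 2) ≤ 7 / 4 * l ^ 2 := by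
  have h2 := integrable_abs_mul_exp_neg_mul_abs (k := 2 / l) (by positivity)
  have h4 := integrable_abs_mul_exp_neg_mul_abs (k := 4 / l) (by positivity)
  calc ∫ x, |x| * (1 / cosh (x / l) ^ 2)
      ≤ ∫ x, 4 * (|x| * exp (-(2 / l * |x|))) - 2 * (|x| * exp (-(4 / l * |x|))) :=
        integral_mono (integrable_abs_mul_one_div_cosh_sq hl)
          ((h2.const_mul 4).sub (h4.const_mul 2)) (abs_mul_one_div_cosh_sq_le hl)
    _ = 7 / 4 * l ^ 2 := by
      rw [integral_sub (h2.const_mul 4) (h4.const_mul 2), integral_const_mul, integral_const_mul,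
        integral_abs_mul_exp_neg_mul_abs (by positivity),
        integral_abs_mul_exp_neg_mul_abs (by positivity)]
      field_simp
      ring

lemma one_div_cosh_mul_cosh_div_sq_le (hl : 4 ≤ l) (x : ℝ) :
    1 / cosh x * cosh (x / l) ^ 2 ≤ 2 * exp (-(1 / 2 * |x|)) := by
  have hc : cosh (x / l) ^ 2 ≤ exp (1 / 2 * |x|) := by
    calc cosh (x / l) ^ 2 ≤ exp |x / l| ^ 2 :=
          pow_le_pow_left₀ (cosh_pos _).le (cosh_le_exp_abs _) 2
      _ = exp (2 / l * |x|) := by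
          rw [← exp_nat_mul, abs_div, abs_of_pos (by linarith : (0 : ℝ) < l)]
          ring_nf
      _ ≤ exp (1 / 2 * |x|) := by
          have h : 2 / l ≤ 1 / 2 := by rw [div_le_iff₀ (by linarith)]; linarith
          exact exp_le_exp.2 (mul_le_mul_of_nonneg_right h (abs_nonneg x))
  calc 1 / cosh x * cosh (x / l) ^ 2 ≤ 2 * exp (-|x|) * exp (1 / 2 * |x|) :=
        mul_le_mul (one_div_cosh_le x) hc (by positivity) (by positivity)
    _ = 2 * exp (-(1 / 2 * |x|)) := by rw [mul_assoc, ← exp_add]; ring_nf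

lemma one_div_cosh_mul_sq_add_sq_le (hl : 4 ≤ l) (x v v' : ℝ) :
    1 / cosh x * ((sinh (x / l) / l * v + cosh (x / l) * v') ^ 2 + (cosh (x / l) * v) ^ 2)
      ≤ 6 * (exp (-(1 / 2 * |x|)) * v ^ 2) + 4 * v' ^ 2 := by
  have hs : (sinh (x / l) / l) ^ 2 ≤ cosh (x / l) ^ 2 := by
    rw [div_pow, div_le_iff₀ (by positivity)]
    nlinarith [sinh_sq (x / l), mul_le_mul_of_nonneg_left (by nlinarith : (1 : ℝ) ≤ l ^ 2)
      (sq_nonneg (cosh (x / l)))]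
  have hsum : (sinh (x / l) / l * v + cosh (x / l) * v') ^ 2 + (cosh (x / l) * v) ^ 2
      ≤ cosh (x / l) ^ 2 * (3 * v ^ 2 + 2 * v' ^ 2) := by
    nlinarith [sq_nonneg (sinh (x / l) / l * v - cosh (x / l) * v'),
      mul_le_mul_of_nonneg_right hs (sq_nonneg v)]
  have hA := one_div_cosh_mul_cosh_div_sq_le hl x
  have hE : exp (-(1 / 2 * |x|)) ≤ 1 := exp_le_one_iff.2 (by simp)
  calc _ ≤ 1 / cosh x * (cosh (x / l) ^ 2 * (3 * v ^ 2 + 2 * v' ^ 2)) :=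
        mul_le_mul_of_nonneg_left hsum (by positivity)
    _ = 1 / cosh x * cosh (x / l) ^ 2 * (3 * v ^ 2)
          + 1 / cosh x * cosh (x / l) ^ 2 * (2 * v' ^ 2) := by ring
    _ ≤ 2 * exp (-(1 / 2 * |x|)) * (3 * v ^ 2) + 2 * (2 * v' ^ 2) := by
        gcongr
        linarith
    _ = _ := by ring

end Profile

/-- The substitution `v = √φ' · w` for `φ = l · tanh (· / l)`. -/
noncomputable def divCosh (l : ℝ) (w : ℝ → ℝ) (x : ℝ) : ℝ := w x / cosh (x / l)

noncomputable def bilinearForm (l : ℝ) (w : ℝ → ℝ) : ℝ :=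
  2 * (∫ x, deriv (fun y => l * tanh (y / l)) x * deriv w x ^ 2)
    - 1 / 2 * (∫ x, iteratedDeriv 3 (fun y => l * tanh (y / l)) x * w x ^ 2)

section GroundState

variable {l : ℝ} {w : ℝ → ℝ}

lemma hasDerivAt_divCosh {w' x : ℝ} (hw : HasDerivAt w w' x) :
    HasDerivAt (divCosh l w)
      (w' / cosh (x / l) - w x * sinh (x / l) / (l * cosh (x / l) ^ 2)) x := by
  have hc : cosh (x / l) ≠ 0 := (cosh_pos _).ne'
  refine (hw.div ((hasDerivAt_id' x).div_const l).cosh hc).congr_deriv ?_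
  field_simp

lemma differentiable_divCosh (hw : Differentiable ℝ w) : Differentiable ℝ (divCosh l w) :=
  fun x => (hasDerivAt_divCosh (hw x).hasDerivAt).differentiableAt

lemma deriv_divCosh (hw : Differentiable ℝ w) (x : ℝ) :
    deriv (divCosh l w) x
      = deriv w x / cosh (x / l) - w x * sinh (x / l) / (l * cosh (x / l) ^ 2) :=
  (hasDerivAt_divCosh (hw x).hasDerivAt).deriv

/-- The integrand of `B(w)` is `2 v'² - φ' v² / l²` up to this exact derivative. -/
lemma hasDerivAt_tanh_mul_divCosh_sq (hl : l ≠ 0) {w' x : ℝ} (hw : HasDerivAt w w' x) :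
    HasDerivAt (fun y => 2 / l * tanh (y / l) * divCosh l w y ^ 2)
      (2 * (1 / cosh (x / l) ^ 2 * w' ^ 2)
        - 1 / 2 * (2 * (2 * sinh (x / l) ^ 2 - 1) / (l ^ 2 * cosh (x / l) ^ 4) * w x ^ 2)
        - 2 * (w' / cosh (x / l) - w x * sinh (x / l) / (l * cosh (x / l) ^ 2)) ^ 2
        + 1 / cosh (x / l) ^ 2 * divCosh l w x ^ 2 / l ^ 2) x := by
  have ht := ((hasDerivAt_tanh (x / l)).comp x ((hasDerivAt_id' x).div_const l)).const_mul (2 / l)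
  have hc : cosh (x / l) ≠ 0 := (cosh_pos _).ne'
  refine (ht.mul ((hasDerivAt_divCosh (l := l) hw).fun_pow 2)).congr_deriv ?_
  simp only [divCosh, Function.comp_apply, tanh_eq_sinh_div_cosh]
  norm_num
  field_simp
  ring

lemma continuous_deriv_divCosh (hl : l ≠ 0) (hw : ContDiff ℝ 1 w) :
    Continuous (deriv (divCosh l w)) := by
  rw [funext (deriv_divCosh (hw.differentiable one_ne_zero))]
  have := hw.continuous_deriv le_rfl
  have := hw.continuous
  fun_prop (disch := first
    | exact fun _ => (cosh_pos _).ne'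
    | exact fun _ => mul_ne_zero hl (pow_ne_zero _ (cosh_pos _).ne'))

lemma integrable_divCosh_sq (hw : Continuous w) (hw2 : Integrable fun x => w x ^ 2) :
    Integrable fun x => divCosh l w x ^ 2 := by
  refine hw2.mono' ((hw.div (by fun_prop) fun x => (cosh_pos _).ne').pow 2).aestronglyMeasurable
    (.of_forall fun x => ?_)
  rw [norm_pow, Real.norm_eq_abs, sq_abs, divCosh, div_pow]
  exact div_le_self (sq_nonneg _) (one_le_pow₀ (one_le_cosh _))

lemma integrable_deriv_divCosh_sq (hl : l ≠ 0) (hw : ContDiff ℝ 1 w)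
    (hw2 : Integrable fun x => w x ^ 2) (hw'2 : Integrable fun x => deriv w x ^ 2) :
    Integrable fun x => deriv (divCosh l w) x ^ 2 := by
  refine ((hw'2.const_mul 2).add ((hw2.div_const (l ^ 2)).const_mul 2)).mono'
    ((continuous_deriv_divCosh hl hw).pow 2).aestronglyMeasurable (.of_forall fun x => ?_)
  rw [norm_pow, Real.norm_eq_abs, sq_abs, deriv_divCosh (hw.differentiable one_ne_zero)]
  have hc : 0 < cosh (x / l) := cosh_pos _
  have hp : (deriv w x / cosh (x / l)) ^ 2 ≤ deriv w x ^ 2 := by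
    rw [div_pow]
    exact div_le_self (sq_nonneg _) (one_le_pow₀ (one_le_cosh _))
  have hq : (w x * sinh (x / l) / (l * cosh (x / l) ^ 2)) ^ 2 ≤ w x ^ 2 / l ^ 2 := by
    have htc : (tanh (x / l) / cosh (x / l)) ^ 2 ≤ 1 := by
      rw [div_pow, div_le_one (by positivity)]
      nlinarith [tanh_sq_lt_one (x / l), one_le_cosh (x / l)]
    calc (w x * sinh (x / l) / (l * cosh (x / l) ^ 2)) ^ 2
        = w x ^ 2 / l ^ 2 * (tanh (x / l) / cosh (x / l)) ^ 2 := by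
          rw [tanh_eq_sinh_div_cosh]; field_simp
      _ ≤ w x ^ 2 / l ^ 2 := mul_le_of_le_one_right (by positivity) htc
  simp only [Pi.add_apply]
  nlinarith [sq_nonneg (deriv w x / cosh (x / l) + w x * sinh (x / l) / (l * cosh (x / l) ^ 2))]

theorem bilinearForm_eq (hl : l ≠ 0) (hw : ContDiff ℝ 1 w) (hw2 : Integrable fun x => w x ^ 2)
    (hw'2 : Integrable fun x => deriv w x ^ 2) :
    bilinearForm l w = 2 * (∫ x, deriv (divCosh l w) x ^ 2)
      - (∫ x, 1 / cosh (x / l) ^ 2 * divCosh l w x ^ 2) / l ^ 2 := by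
  have hdiff := hw.differentiable one_ne_zero
  have hv2 := integrable_divCosh_sq (l := l) hw.continuous hw2
  have hv'2 := integrable_deriv_divCosh_sq hl hw hw2 hw'2
  have hφ' : Continuous fun x => 1 / cosh (x / l) ^ 2 :=
    continuous_const.div (by fun_prop) fun _ => (pow_pos (cosh_pos _) 2).ne'
  have h1 : Integrable fun x => 1 / cosh (x / l) ^ 2 * deriv w x ^ 2 :=
    hw'2.bdd_mul hφ'.aestronglyMeasurable (.of_forall fun x => abs_one_div_cosh_sq_le_one _)
  have h3 : Integrable fun x =>
      2 * (2 * sinh (x / l) ^ 2 - 1) / (l ^ 2 * cosh (x / l) ^ 4) * w x ^ 2 :=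
    hw2.bdd_mul (Continuous.div (by fun_prop) (by fun_prop)
      fun _ => mul_ne_zero (pow_ne_zero 2 hl) (pow_pos (cosh_pos _) 4).ne').aestronglyMeasurable
      (.of_forall fun x => by
        simpa only [Real.norm_eq_abs, iteratedDeriv_three_mul_tanh_div hl]
          using abs_iteratedDeriv_three_mul_tanh_div_le hl x)
  have h4 : Integrable fun x => 1 / cosh (x / l) ^ 2 * divCosh l w x ^ 2 :=
    hv2.bdd_mul hφ'.aestronglyMeasurable (.of_forall fun x => abs_one_div_cosh_sq_le_one _)
  have hG : Integrable fun x => 2 / l * tanh (x / l) * divCosh l w x ^ 2 :=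
    hv2.bdd_mul (c := |2 / l|)
      (continuous_const.mul (continuous_tanh.comp (by fun_prop))).aestronglyMeasurable
      (.of_forall fun x => by
        rw [Real.norm_eq_abs, abs_mul]
        exact mul_le_of_le_one_right (abs_nonneg _) (abs_tanh_lt_one _).le)
  have hG' (x : ℝ) : HasDerivAt (fun y => 2 / l * tanh (y / l) * divCosh l w y ^ 2)
      (2 * (1 / cosh (x / l) ^ 2 * deriv w x ^ 2)
        - 1 / 2 * (2 * (2 * sinh (x / l) ^ 2 - 1) / (l ^ 2 * cosh (x / l) ^ 4) * w x ^ 2)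
        - 2 * deriv (divCosh l w) x ^ 2
        + 1 / cosh (x / l) ^ 2 * divCosh l w x ^ 2 / l ^ 2) x := by
    rw [deriv_divCosh hdiff]
    exact hasDerivAt_tanh_mul_divCosh_sq hl (hdiff x).hasDerivAt
  have hzero := integral_eq_zero_of_hasDerivAt_of_integrable hG'
    ((((h1.const_mul 2).sub (h3.const_mul _)).sub (hv'2.const_mul 2)).add (h4.div_const _)) hG
  rw [integral_add (by exact ((h1.const_mul 2).sub (h3.const_mul _)).sub (hv'2.const_mul 2))
      (h4.div_const _),
    integral_sub (by exact (h1.const_mul 2).sub (h3.const_mul _)) (hv'2.const_mul 2),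
    integral_sub (h1.const_mul 2) (h3.const_mul _), integral_const_mul, integral_const_mul,
    integral_const_mul, integral_div] at hzero
  rw [bilinearForm, deriv_mul_tanh_div hl, iteratedDeriv_three_mul_tanh_div hl]
  beta_reduce
  linarith

theorem integral_deriv_divCosh_sq_le_bilinearForm (hl : 0 < l) (hw : ContDiff ℝ 1 w)
    (hw0 : w 0 = 0) (hw2 : Integrable fun x => w x ^ 2)
    (hw'2 : Integrable fun x => deriv w x ^ 2) :
    ∫ x, deriv (divCosh l w) x ^ 2 ≤ 4 * bilinearForm l w := by
  have hardy := integral_mul_sq_le_of_hasDerivAt (ρ := fun x => 1 / cosh (x / l) ^ 2)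
    (fun x => by positivity) (integrable_abs_mul_one_div_cosh_sq hl)
    (fun x => (differentiable_divCosh (hw.differentiable one_ne_zero) x).hasDerivAt)
    (continuous_deriv_divCosh hl.ne' hw) (integrable_deriv_divCosh_sq hl.ne' hw hw2 hw'2)
    (by simp [divCosh, hw0])
  have hI : 0 ≤ ∫ x, deriv (divCosh l w) x ^ 2 := integral_nonneg fun x => sq_nonneg _
  have hJ : (∫ x, 1 / cosh (x / l) ^ 2 * divCosh l w x ^ 2) / l ^ 2
      ≤ 7 / 4 * ∫ x, deriv (divCosh l w) x ^ 2 := by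
    rw [div_le_iff₀ (by positivity)]
    nlinarith [integral_abs_mul_one_div_cosh_sq_le hl]
  rw [bilinearForm_eq hl.ne' hw hw2 hw'2]
  linarith

theorem integral_one_div_cosh_mul_le_integral_deriv_divCosh_sq (hl : 4 ≤ l)
    (hw : ContDiff ℝ 1 w) (hw0 : w 0 = 0) (hw2 : Integrable fun x => w x ^ 2)
    (hw'2 : Integrable fun x => deriv w x ^ 2) :
    ∫ x, 1 / cosh x * (deriv w x ^ 2 + w x ^ 2) ≤ 52 * ∫ x, deriv (divCosh l w) x ^ 2 := by
  have hl0 : l ≠ 0 := by positivity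
  have hdiff := hw.differentiable one_ne_zero
  have hv'2 := integrable_deriv_divCosh_sq hl0 hw hw2 hw'2
  have hρv : Integrable fun x => exp (-(1 / 2 * |x|)) * divCosh l w x ^ 2 :=
    (integrable_divCosh_sq hw.continuous hw2).bdd_mul (by fun_prop)
      (.of_forall fun x => by
        rw [Real.norm_eq_abs, abs_of_pos (exp_pos _)]
        exact exp_le_one_iff.2 (by simp))
  have hardy := integral_mul_sq_le_of_hasDerivAt (ρ := fun x => exp (-(1 / 2 * |x|)))
    (fun x => (exp_pos _).le) (integrable_abs_mul_exp_neg_mul_abs (by norm_num))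
    (fun x => (differentiable_divCosh hdiff x).hasDerivAt) (continuous_deriv_divCosh hl0 hw) hv'2
    (by simp [divCosh, hw0])
  rw [integral_abs_mul_exp_neg_mul_abs (by norm_num)] at hardy
  have hpt (x : ℝ) : 1 / cosh x * (deriv w x ^ 2 + w x ^ 2)
      ≤ 6 * (exp (-(1 / 2 * |x|)) * divCosh l w x ^ 2) + 4 * deriv (divCosh l w) x ^ 2 := by
    have hc : cosh (x / l) ≠ 0 := (cosh_pos _).ne'
    have hwx : w x = cosh (x / l) * divCosh l w x := by rw [divCosh]; field_simp
    have hw'x : deriv w x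
        = sinh (x / l) / l * divCosh l w x + cosh (x / l) * deriv (divCosh l w) x := by
      rw [deriv_divCosh hdiff, divCosh]; field_simp; ring
    rw [hw'x, hwx]
    exact one_div_cosh_mul_sq_add_sq_le hl x _ _
  calc ∫ x, 1 / cosh x * (deriv w x ^ 2 + w x ^ 2)
      ≤ ∫ x, 6 * (exp (-(1 / 2 * |x|)) * divCosh l w x ^ 2) + 4 * deriv (divCosh l w) x ^ 2 :=
        integral_mono_of_nonneg (.of_forall fun x => by positivity)
          ((hρv.const_mul 6).add (hv'2.const_mul 4)) (.of_forall hpt)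
    _ = 6 * (∫ x, exp (-(1 / 2 * |x|)) * divCosh l w x ^ 2)
          + 4 * ∫ x, deriv (divCosh l w) x ^ 2 := by
        rw [integral_add (hρv.const_mul 6) (hv'2.const_mul 4), integral_const_mul,
          integral_const_mul]
    _ ≤ 52 * ∫ x, deriv (divCosh l w) x ^ 2 := by norm_num at hardy; linarith

theorem integral_one_div_cosh_mul_le_bilinearForm (hl : 4 ≤ l) (hw : ContDiff ℝ 1 w)
    (hw0 : w 0 = 0) (hw2 : Integrable fun x => w x ^ 2)
    (hw'2 : Integrable fun x => deriv w x ^ 2) :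
    ∫ x, 1 / cosh x * (deriv w x ^ 2 + w x ^ 2) ≤ 208 * bilinearForm l w := by
  linarith [integral_one_div_cosh_mul_le_integral_deriv_divCosh_sq hl hw hw0 hw2 hw'2,
    integral_deriv_divCosh_sq_le_bilinearForm (by linarith : (0 : ℝ) < l) hw hw0 hw2 hw'2]

end GroundState

section Components

variable {E : Type*} [NormedAddCommGroup E] [NormedSpace ℝ E] (L : E →L[ℝ] ℝ)
  {u : ℝ → E}

lemma deriv_continuousLinearMap_apply (hu : Differentiable ℝ u) :
    deriv (fun y => L (u y)) = fun x => L (deriv u x) :=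
  funext fun x => (L.hasFDerivAt.comp_hasDerivAt x (hu x).hasDerivAt).deriv

lemma integrable_one_div_cosh_mul_clm_sq (hu : ContDiff ℝ 1 u)
    (hu2 : Integrable fun x => ‖u x‖ ^ 2) (hu'2 : Integrable fun x => ‖deriv u x‖ ^ 2) :
    Integrable fun x => 1 / cosh x * (L (deriv u x) ^ 2 + L (u x) ^ 2) :=
  ((integrable_clm_comp_sq L (hu.continuous_deriv le_rfl).aestronglyMeasurable hu'2).add
    (integrable_clm_comp_sq L hu.continuous.aestronglyMeasurable hu2)).bdd_mul (c := 1)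
    (continuous_const.div continuous_cosh fun x => (cosh_pos x).ne').aestronglyMeasurable
    (.of_forall fun x => by
      rw [Real.norm_eq_abs, abs_of_pos (by positivity)]
      exact div_le_one_of_le₀ (one_le_cosh x) (cosh_pos x).le)

theorem integral_one_div_cosh_mul_clm_sq_le_bilinearForm {l : ℝ} (hl : 4 ≤ l)
    (hu : ContDiff ℝ 1 u) (hu0 : u 0 = 0) (hu2 : Integrable fun x => ‖u x‖ ^ 2)
    (hu'2 : Integrable fun x => ‖deriv u x‖ ^ 2) :
    ∫ x, 1 / cosh x * (L (deriv u x) ^ 2 + L (u x) ^ 2)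
      ≤ 208 * bilinearForm l fun y => L (u y) := by
  have hderiv := deriv_continuousLinearMap_apply L (hu.differentiable one_ne_zero)
  have key := integral_one_div_cosh_mul_le_bilinearForm (w := fun y => L (u y)) hl
    (L.contDiff.comp hu) (by simp [hu0])
    (integrable_clm_comp_sq L hu.continuous.aestronglyMeasurable hu2)
    (by
      rw [hderiv]
      exact integrable_clm_comp_sq L (hu.continuous_deriv le_rfl).aestronglyMeasurable hu'2)
  rwa [hderiv] at key

end Components

/-- Lemma 2.3: the weighted H¹ norm is controlled by the bilinear form B applied to the
real and imaginary parts, for odd functions (λ = 100, φ(x) = 100·tanh(x/100)). -/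
theorem weighted_H1_le_bilinear_form :
    ∃ C > 0, ∀ u : ℝ → ℂ,
      ContDiff ℝ 1 u →
      (∀ x : ℝ, u (-x) = - u x) →
      Integrable (fun x : ℝ => ‖u x‖ ^ 2) →
      Integrable (fun x : ℝ => ‖deriv u x‖ ^ 2) →
      (∫ x : ℝ, (1 / Real.cosh x) * (‖deriv u x‖ ^ 2 + ‖u x‖ ^ 2))
      ≤ C * ((2 * (∫ x : ℝ, deriv (fun y : ℝ => 100 * Real.tanh (y / 100)) x
                    * (deriv (fun y : ℝ => (u y).re) x) ^ 2)
              - (1 / 2) * (∫ x : ℝ, iteratedDeriv 3 (fun y : ℝ => 100 * Real.tanh (y / 100)) x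
                    * ((u x).re) ^ 2))
          + (2 * (∫ x : ℝ, deriv (fun y : ℝ => 100 * Real.tanh (y / 100)) x
                    * (deriv (fun y : ℝ => (u y).im) x) ^ 2)
              - (1 / 2) * (∫ x : ℝ, iteratedDeriv 3 (fun y : ℝ => 100 * Real.tanh (y / 100)) x
                    * ((u x).im) ^ 2))) := by
  refine ⟨208, by norm_num, fun u hu hodd hu2 hu'2 => ?_⟩
  have hu0 : u 0 = 0 := CharZero.eq_neg_self_iff.1 (by simpa using hodd 0)
  have hint_re := integrable_one_div_cosh_mul_clm_sq Complex.reCLM hu hu2 hu'2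
  have hint_im := integrable_one_div_cosh_mul_clm_sq Complex.imCLM hu hu2 hu'2
  have hle_re := integral_one_div_cosh_mul_clm_sq_le_bilinearForm Complex.reCLM
    (by norm_num : (4 : ℝ) ≤ 100) hu hu0 hu2 hu'2
  have hle_im := integral_one_div_cosh_mul_clm_sq_le_bilinearForm Complex.imCLM
    (by norm_num : (4 : ℝ) ≤ 100) hu hu0 hu2 hu'2
  simp only [Complex.reCLM_apply, Complex.imCLM_apply] at hint_re hle_re hint_im hle_im
  have hsplit (x : ℝ) : 1 / cosh x * (‖deriv u x‖ ^ 2 + ‖u x‖ ^ 2)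
      = 1 / cosh x * ((deriv u x).re ^ 2 + (u x).re ^ 2)
        + 1 / cosh x * ((deriv u x).im ^ 2 + (u x).im ^ 2) := by
    simp only [Complex.sq_norm, Complex.normSq_apply]
    ring
  rw [integral_congr_ae (.of_forall hsplit), integral_add hint_re hint_im]
  show _ ≤ 208 * (bilinearForm 100 (fun y => (u y).re) + bilinearForm 100 (fun y => (u y).im))
  linarith
end

section
/- Let 0 < a < 1, let φ : ℝ → ℝ be a bounded non-decreasing smooth function, and let ρ : ℝ → ℝ be a nonnegative integrable function such that the double integral ∫_ℝ∫_ℝ |φ(x)|·|x-y|^{-(a+1)} ρ(y) ρ(x) dy dx is finite. Then ∫_ℝ ∫_ℝ φ(x)·(x-y)·|x-y|^{-(a+2)}·ρ(y)·ρ(x) dy dx ≥ 0. -/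
open MeasureTheory Real

/-- Positivity (4.4): for a non-decreasing bounded smooth weight φ and a nonnegative
density ρ, the virial double integral with the odd kernel (x−y)|x−y|^{-(a+2)} is
nonnegative. -/
theorem hartree_virial_positivity
    (a : ℝ) (ha0 : 0 < a) (ha1 : a < 1)
    (φ : ℝ → ℝ) (hφ : ContDiff ℝ (⊤ : ℕ∞) φ) (hφmono : Monotone φ)
    (hφbdd : ∃ M : ℝ, ∀ x : ℝ, |φ x| ≤ M)
    (ρ : ℝ → ℝ) (hρ : ∀ x : ℝ, 0 ≤ ρ x) (hρint : Integrable ρ)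
    (hfin : Integrable (fun q : ℝ × ℝ =>
        |φ q.1| * |q.1 - q.2| ^ (-(a + 1)) * ρ q.2 * ρ q.1)) :
    0 ≤ ∫ x : ℝ, ∫ y : ℝ, φ x * (x - y) * |x - y| ^ (-(a + 2)) * ρ y * ρ x := by
  set F : ℝ × ℝ → ℝ :=
    fun q => φ q.1 * (q.1 - q.2) * |q.1 - q.2| ^ (-(a + 2)) * ρ q.2 * ρ q.1 with hF
  have hρm : AEStronglyMeasurable ρ (volume : Measure ℝ) := hρint.aestronglyMeasurable
  have hkm : AEStronglyMeasurable (fun q : ℝ × ℝ => |q.1 - q.2| ^ (-(a + 2)))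
      ((volume : Measure ℝ).prod volume) :=
    ((continuous_fst.sub continuous_snd).abs.measurable.pow_const _).aestronglyMeasurable
  have hFm : AEStronglyMeasurable F ((volume : Measure ℝ).prod volume) := by
    refine ((((hφ.continuous.comp continuous_fst).mul
      (continuous_fst.sub continuous_snd)).aestronglyMeasurable.mul hkm).mul
      (hρm.comp_snd)).mul (hρm.comp_fst)
  -- the absolute value of F is bounded by the integrable majorant
  have hzpow : ∀ z : ℝ, |z| * |z| ^ (-(a + 2)) = |z| ^ (-(a + 1)) := by
    intro z
    rcases eq_or_ne z 0 with rfl | hz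
    · simp only [abs_zero]
      rw [Real.zero_rpow (by linarith), Real.zero_rpow (by linarith), mul_zero]
    · have hz' : 0 < |z| := abs_pos.2 hz
      have h1 : -(a + 1) = 1 + -(a + 2) := by ring
      rw [h1, Real.rpow_add hz', Real.rpow_one]
  have hFint : Integrable F ((volume : Measure ℝ).prod volume) := by
    have hfin' : Integrable (fun q : ℝ × ℝ =>
        |φ q.1| * |q.1 - q.2| ^ (-(a + 1)) * ρ q.2 * ρ q.1)
        ((volume : Measure ℝ).prod volume) := by
      rw [← Measure.volume_eq_prod]; exact hfin
    refine hfin'.mono hFm (Filter.Eventually.of_forall fun q => ?_)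
    have hnn : 0 ≤ |φ q.1| * |q.1 - q.2| ^ (-(a + 1)) * ρ q.2 * ρ q.1 :=
      mul_nonneg (mul_nonneg (mul_nonneg (abs_nonneg _)
        (Real.rpow_nonneg (abs_nonneg _) _)) (hρ _)) (hρ _)
    rw [Real.norm_eq_abs, Real.norm_eq_abs, abs_of_nonneg hnn, hF]
    have : |φ q.1 * (q.1 - q.2) * |q.1 - q.2| ^ (-(a + 2)) * ρ q.2 * ρ q.1|
        = |φ q.1| * (|q.1 - q.2| * |q.1 - q.2| ^ (-(a + 2))) * ρ q.2 * ρ q.1 := by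
      rw [abs_mul, abs_mul, abs_mul, abs_mul,
        abs_of_nonneg (Real.rpow_nonneg (abs_nonneg _) _),
        abs_of_nonneg (hρ _), abs_of_nonneg (hρ _)]
      ring
    rw [this, hzpow]
  have hFswap : Integrable (fun q : ℝ × ℝ => F q.swap) ((volume : Measure ℝ).prod volume) :=
    hFint.swap
  -- symmetrized integrand is pointwise nonnegative
  have hsum : ∀ q : ℝ × ℝ, 0 ≤ F q + F q.swap := by
    intro ⟨x, y⟩
    simp only [hF, Prod.swap_prod_mk]
    have habs : |y - x| = |x - y| := abs_sub_comm y x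
    have : φ x * (x - y) * |x - y| ^ (-(a + 2)) * ρ y * ρ x
        + φ y * (y - x) * |y - x| ^ (-(a + 2)) * ρ x * ρ y
        = ((φ x - φ y) * (x - y)) * |x - y| ^ (-(a + 2)) * ρ y * ρ x := by
      rw [habs]; ring
    rw [this]
    have h1 : 0 ≤ (φ x - φ y) * (x - y) := by
      rcases le_total x y with h | h
      · nlinarith [hφmono h]
      · nlinarith [hφmono h]
    exact mul_nonneg (mul_nonneg (mul_nonneg h1
      (Real.rpow_nonneg (abs_nonneg _) _)) (hρ _)) (hρ _)
  have hswap_eq : ∫ q, F q.swap ∂((volume : Measure ℝ).prod volume)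
      = ∫ q, F q ∂((volume : Measure ℝ).prod volume) :=
    MeasureTheory.integral_prod_swap F
  have hkey : 0 ≤ ∫ q, F q ∂((volume : Measure ℝ).prod volume) := by
    have h2 : 0 ≤ ∫ q, (F q + F q.swap) ∂((volume : Measure ℝ).prod volume) :=
      integral_nonneg hsum
    rw [integral_add hFint hFswap, hswap_eq] at h2
    linarith
  have h1 : ∫ x : ℝ, ∫ y : ℝ, φ x * (x - y) * |x - y| ^ (-(a + 2)) * ρ y * ρ x
      = ∫ q, F q ∂((volume : Measure ℝ).prod volume) :=
    MeasureTheory.integral_integral hFint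
  rw [h1]; exact hkey
end
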